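/- For α ∈ (0,2], k > ε, the truncation g_k := χ_{(ε,k]}·g₀ of the even function g₀(x) = 1/√(r(x)·x) (extended by 0 on [−ε,ε]) satisfies t_α(g_k, g_k) ≥ 2‖(g_k)_o‖²_{ω_α} = (2/α)(k^{α/2} − ε^{α/2}); in particular t_α(g_k,g_k) → ∞ as k → ∞ although g₀ ∈ dom t_α. -/
import Mathlib


open MeasureTheory Filter

/-- `η_α(x) := (√(|x|^α+1) − √(|x|^α))·|r(x)|`. -/
noncomputable def eta (α : ℝ) (r : ℝ → ℝ) (x : ℝ) : ℝ :=
  (Real.sqrt (|x| ^ α + 1) - Real.sqrt (|x| ^ α)) * |r x|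

/-- `ω_α(x) := √(|x|^α)·|r(x)|`. -/
noncomputable def omegaW (α : ℝ) (r : ℝ → ℝ) (x : ℝ) : ℝ :=
  Real.sqrt (|x| ^ α) * |r x|

/-- `r₊(x) := x·r(x)`. -/
def rplus (r : ℝ → ℝ) (x : ℝ) : ℝ := x * r x

/-- `r₋(x) := r(x)/x` (with junk value `0` at `x = 0`, where `r` vanishes anyway). -/
noncomputable def rminus (r : ℝ → ℝ) (x : ℝ) : ℝ := r x / x

/-- Membership in the weighted space `L²(w)`. -/
def MemL2W (w : ℝ → ℝ) (f : ℝ → ℂ) : Prop :=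
  Integrable (fun x => ‖f x‖ ^ 2 * w x)

/-- Even part of a function. -/
noncomputable def evenPart (f : ℝ → ℂ) (x : ℝ) : ℂ := (f x + f (-x)) / 2

/-- Odd part of a function. -/
noncomputable def oddPart (f : ℝ → ℂ) (x : ℝ) : ℂ := (f x - f (-x)) / 2

/-- `dom t_α = {f ∈ L²(r₋) : f_e ∈ L²(η_α), f_o ∈ L²(ω_α)}`. -/
noncomputable def DomT (α : ℝ) (r : ℝ → ℝ) (f : ℝ → ℂ) : Prop :=
  MemL2W (rminus r) f ∧ MemL2W (eta α r) (evenPart f) ∧ MemL2W (omegaW α r) (oddPart f)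

/-- The squared norm `t_α(f,f) = 2‖f_o‖²_{ω_α} + ‖f‖²_{η_α}`. -/
noncomputable def Qform (α : ℝ) (r : ℝ → ℝ) (f : ℝ → ℂ) : ℝ :=
  2 * (∫ x, ‖oddPart f x‖ ^ 2 * omegaW α r x) + ∫ x, ‖f x‖ ^ 2 * eta α r x

/-- The even function `g₀(x) := 1/√(r(x)·x)`, extended by `0` on `[−ε,ε]`. -/
noncomputable def gzero (r : ℝ → ℝ) (ε : ℝ) (x : ℝ) : ℂ :=
  if |x| ≤ ε then 0 else ((1 / Real.sqrt (r x * x) : ℝ) : ℂ)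

open Set Filter

lemma neg_indicator_eq (s : Set ℝ) (F : ℝ → ℝ) (hF : ∀ x, F (-x) = F x) :
    (-s).indicator F = fun x => s.indicator F (-x) := by
  funext x
  by_cases hx : x ∈ -s
  · rw [Set.indicator_of_mem hx, Set.indicator_of_mem (Set.mem_neg.1 hx), hF]
  · rw [Set.indicator_of_notMem hx,
      Set.indicator_of_notMem (fun h' => hx (Set.mem_neg.2 h'))]

lemma integrable_neg_indicator {s : Set ℝ} {F : ℝ → ℝ} (hF : ∀ x, F (-x) = F x)
    (h : Integrable (s.indicator F)) : Integrable ((-s).indicator F) := by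
  rw [neg_indicator_eq s F hF]
  exact ((Measure.measurePreserving_neg (volume : Measure ℝ)).integrable_comp_emb
    (MeasurableEquiv.neg ℝ).measurableEmbedding).2 h

lemma integral_neg_indicator {s : Set ℝ} {F : ℝ → ℝ} (hF : ∀ x, F (-x) = F x) :
    ∫ x, (-s).indicator F x = ∫ x, s.indicator F x := by
  rw [neg_indicator_eq s F hF]
  exact integral_neg_eq_self (s.indicator F) volume

lemma tail_set_eq {ε : ℝ} : {x : ℝ | ε < |x|} = Set.Ioi ε ∪ -(Set.Ioi ε) := by
  ext x
  simp only [Set.mem_setOf_eq, Set.mem_union, Set.mem_neg, Set.mem_Ioi]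
  exact lt_abs

lemma integrable_tail_rpow {ε c : ℝ} (hε : 0 < ε) (hc : c < -1) :
    Integrable (Set.indicator {x : ℝ | ε < |x|} (fun x : ℝ => |x| ^ c)) := by
  have habs : ∀ x : ℝ, |(-x)| ^ c = |x| ^ c := fun x => by rw [abs_neg]
  have hpos : Integrable ((Set.Ioi ε).indicator (fun x : ℝ => |x| ^ c)) := by
    rw [integrable_indicator_iff measurableSet_Ioi]
    exact (integrableOn_Ioi_rpow_of_lt hc hε).congr_fun
      (fun x hx => by rw [abs_of_pos (hε.trans hx)]) measurableSet_Ioi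
  have hneg := integrable_neg_indicator habs hpos
  have hdisj : Disjoint (Set.Ioi ε) (-(Set.Ioi ε)) := by
    rw [Set.neg_Ioi]
    apply Set.disjoint_left.2
    intro x hx hx'
    simp only [Set.mem_Ioi, Set.mem_Iio] at hx hx'
    linarith
  rw [tail_set_eq, Set.indicator_union_of_disjoint hdisj]
  exact hpos.add hneg

lemma sqrt_rpow_pos {x : ℝ} (hx : 0 < x) (α : ℝ) : Real.sqrt (x ^ α) = x ^ (α / 2) := by
  rw [Real.sqrt_eq_rpow, ← Real.rpow_mul hx.le]
  ring_nf

lemma sqrt_add_one_sub_sqrt_le {a : ℝ} (ha : 0 < a) :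
    Real.sqrt (a + 1) - Real.sqrt a ≤ 1 / Real.sqrt a := by
  have hsa : 0 < Real.sqrt a := Real.sqrt_pos.2 ha
  have h1 : Real.sqrt (a + 1) ≤ Real.sqrt a + 1 / Real.sqrt a := by
    rw [show Real.sqrt a + 1 / Real.sqrt a = Real.sqrt ((Real.sqrt a + 1 / Real.sqrt a) ^ 2) from
      (Real.sqrt_sq (by positivity)).symm]
    apply Real.sqrt_le_sqrt
    have h2 : Real.sqrt a ^ 2 = a := Real.sq_sqrt ha.le
    have h3 : Real.sqrt a * (1 / Real.sqrt a) = 1 := by field_simp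
    nlinarith [sq_nonneg (1 / Real.sqrt a)]
  linarith

section gz
variable {α ε : ℝ} {r : ℝ → ℝ}

lemma gzero_even (hrodd : ∀ x, r (-x) = -r x) (x : ℝ) : gzero r ε (-x) = gzero r ε x := by
  unfold gzero
  rw [abs_neg, hrodd]
  ring_nf

lemma gzero_measurable (hrm : Measurable r) : Measurable (gzero r ε) := by
  unfold gzero
  apply Measurable.ite
  · exact measurableSet_le (measurable_abs) measurable_const
  · exact measurable_const
  · exact Complex.measurable_ofReal.comp
      (measurable_const.div ((hrm.mul measurable_id).sqrt))

lemma norm_sq_gzero {x : ℝ} (hx : ε < |x|) (ht : 0 < x * r x) :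
    ‖gzero r ε x‖ ^ 2 = 1 / (x * r x) := by
  unfold gzero
  rw [if_neg (not_le.2 hx), Complex.norm_real, Real.norm_eq_abs]
  rw [sq_abs, div_pow, one_pow, Real.sq_sqrt (by rw [mul_comm]; exact ht.le), mul_comm]

end gz

lemma norm_oddPart_half (a : ℂ) : ‖a / 2‖ ^ 2 = ‖a‖ ^ 2 / 4 := by
  rw [norm_div]
  norm_num
  ring

lemma odd_integrand_eq {α ε : ℝ} {r : ℝ → ℝ} (hε : 0 < ε) {k : ℝ}
    (hrodd : ∀ x, r (-x) = -r x)
    (x : ℝ) (hP : ε < |x| → 0 < x * r x) :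
    ‖oddPart (fun y => Set.indicator (Set.Ioc ε k) (gzero r ε) y) x‖ ^ 2 * omegaW α r x
      = (Set.Ioc ε k).indicator (fun t => 4⁻¹ * |t| ^ (α / 2 - 1)) x
        + (-(Set.Ioc ε k)).indicator (fun t => 4⁻¹ * |t| ^ (α / 2 - 1)) x := by
  by_cases h1 : x ∈ Set.Ioc ε k
  · have hx0 : 0 < x := hε.trans h1.1
    have hnm : -x ∉ Set.Ioc ε k := fun h => absurd h.1 (by simp only [Set.mem_Ioc] at *; linarith)
    have hnm' : x ∉ -(Set.Ioc ε k) := fun h => hnm (Set.mem_neg.1 h)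
    have hax : ε < |x| := by rw [abs_of_pos hx0]; exact h1.1
    have ht : 0 < x * r x := hP hax
    have hrx : 0 < r x := by
      rcases mul_pos_iff.1 ht with ⟨_, h⟩ | ⟨h, _⟩
      · exact h
      · exact absurd hx0 (by linarith)
    have hodd : oddPart (fun y => Set.indicator (Set.Ioc ε k) (gzero r ε) y) x
        = gzero r ε x / 2 := by
      simp only [oddPart, Set.indicator_of_mem h1, Set.indicator_of_notMem hnm, sub_zero]
    rw [hodd, norm_oddPart_half, norm_sq_gzero hax ht,
      Set.indicator_of_mem h1, Set.indicator_of_notMem hnm']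
    unfold omegaW
    rw [abs_of_pos hx0, abs_of_pos hrx, sqrt_rpow_pos hx0,
      Real.rpow_sub hx0, Real.rpow_one, add_zero]
    field_simp
  · by_cases h2 : x ∈ -(Set.Ioc ε k)
    · have hm : -x ∈ Set.Ioc ε k := Set.mem_neg.1 h2
      have hx0 : x < 0 := by have := hm.1; linarith
      have hax : ε < |x| := by rw [abs_of_neg hx0]; exact hm.1
      have ht : 0 < x * r x := hP hax
      have hrx : r x < 0 := by
        rcases mul_pos_iff.1 ht with ⟨h, _⟩ | ⟨_, h⟩
        · exact absurd hx0 (by linarith)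
        · exact h
      have ht' : 0 < (-x) * r (-x) := by rw [hrodd]; ring_nf; nlinarith
      have hodd : oddPart (fun y => Set.indicator (Set.Ioc ε k) (gzero r ε) y) x
          = -(gzero r ε (-x)) / 2 := by
        simp only [oddPart, Set.indicator_of_mem hm, Set.indicator_of_notMem h1, zero_sub,
          neg_div]
      have hax' : ε < |(-x)| := by rwa [abs_neg]
      rw [hodd, show -(gzero r ε (-x)) / 2 = (-(gzero r ε (-x))) / 2 from rfl,
        norm_oddPart_half, norm_neg, norm_sq_gzero hax' ht',
        Set.indicator_of_notMem h1, Set.indicator_of_mem h2]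
      unfold omegaW
      have hy : 0 < -x := by linarith
      rw [abs_of_neg hx0, abs_of_neg hrx, sqrt_rpow_pos hy,
        Real.rpow_sub hy, Real.rpow_one, zero_add, hrodd]
      have hrxne : r x ≠ 0 := ne_of_lt hrx
      have hxne : x ≠ 0 := ne_of_lt hx0
      field_simp
    · have hnm : -x ∉ Set.Ioc ε k := fun h => h2 (Set.mem_neg.2 h)
      have hodd : oddPart (fun y => Set.indicator (Set.Ioc ε k) (gzero r ε) y) x = 0 := by
        simp only [oddPart, Set.indicator_of_notMem h1, Set.indicator_of_notMem hnm,
          sub_zero, zero_div]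
      rw [hodd, Set.indicator_of_notMem h1, Set.indicator_of_notMem h2]
      simp

lemma phi_indicator_integrable {α ε k : ℝ} (hε : 0 < ε) :
    Integrable ((Set.Ioc ε k).indicator (fun t : ℝ => 4⁻¹ * |t| ^ (α / 2 - 1))) := by
  rw [integrable_indicator_iff measurableSet_Ioc]
  have hc : ContinuousOn (fun t : ℝ => 4⁻¹ * |t| ^ (α / 2 - 1)) (Set.Icc ε k) := by
    apply continuousOn_const.mul
    apply ContinuousOn.rpow_const continuous_abs.continuousOn
    intro t ht
    left
    have : 0 < t := lt_of_lt_of_le hε ht.1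
    simp [abs_ne_zero, ne_of_gt this]
  exact (hc.integrableOn_compact isCompact_Icc).mono_set Set.Ioc_subset_Icc_self

lemma phi_indicator_integral {α ε k : ℝ} (hα : 0 < α) (hε : 0 < ε) (hεk : ε < k) :
    ∫ x, (Set.Ioc ε k).indicator (fun t : ℝ => 4⁻¹ * |t| ^ (α / 2 - 1)) x
      = 4⁻¹ * ((k ^ (α / 2) - ε ^ (α / 2)) / (α / 2)) := by
  rw [integral_indicator measurableSet_Ioc]
  rw [setIntegral_congr_fun measurableSet_Ioc
    (g := fun t : ℝ => 4⁻¹ * t ^ (α / 2 - 1))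
    (fun t ht => by rw [abs_of_pos (hε.trans ht.1)])]
  rw [← intervalIntegral.integral_of_le hεk.le]
  rw [intervalIntegral.integral_const_mul, integral_rpow (Or.inl (by linarith))]
  rw [show α / 2 - 1 + 1 = α / 2 by ring]

lemma gzero_evenPart {ε : ℝ} {r : ℝ → ℝ} (hrodd : ∀ x, r (-x) = -r x) :
    evenPart (gzero r ε) = gzero r ε := by
  funext x
  unfold evenPart
  rw [gzero_even hrodd]
  ring

lemma gzero_oddPart {ε : ℝ} {r : ℝ → ℝ} (hrodd : ∀ x, r (-x) = -r x) :
    oddPart (gzero r ε) = fun _ => 0 := by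
  funext x
  unfold oddPart
  rw [gzero_even hrodd]
  ring

lemma abs_ne_zero_of_pos_mul {x y : ℝ} (ht : 0 < x * y) : x ≠ 0 ∧ y ≠ 0 := by
  constructor
  · rintro rfl; simp at ht
  · rintro h; rw [h, mul_zero] at ht; exact lt_irrefl 0 ht

lemma memL2W_rminus {ε : ℝ} (hε : 0 < ε) {r : ℝ → ℝ}
    (hrpos : ∀ᵐ x ∂(volume : Measure ℝ), ε < |x| → 0 < x * r x) :
    MemL2W (rminus r) (gzero r ε) := by
  have h0 : Integrable (Set.indicator {x : ℝ | ε < |x|} (fun x : ℝ => |x| ^ (-2 : ℝ))) :=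
    integrable_tail_rpow hε (by norm_num)
  apply h0.congr
  filter_upwards [hrpos] with x hP
  by_cases hx : ε < |x|
  · have ht := hP hx
    obtain ⟨hx0, hr0⟩ := abs_ne_zero_of_pos_mul ht
    rw [Set.indicator_of_mem (show x ∈ {x : ℝ | ε < |x|} from hx), norm_sq_gzero hx ht]
    unfold rminus
    have h2 : |x| ^ (-2 : ℝ) = (x ^ 2)⁻¹ := by
      rw [Real.rpow_neg (abs_nonneg x), show ((2 : ℝ)) = ((2 : ℕ) : ℝ) by norm_num,
        Real.rpow_natCast, sq_abs]
    rw [h2]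
    field_simp
  · rw [Set.indicator_of_notMem (show x ∉ {x : ℝ | ε < |x|} from hx)]
    unfold gzero
    rw [if_pos (not_lt.1 hx)]
    simp

lemma eta_nonneg (α : ℝ) (r : ℝ → ℝ) (x : ℝ) : 0 ≤ eta α r x :=
  mul_nonneg (sub_nonneg.2 (Real.sqrt_le_sqrt (by linarith))) (abs_nonneg _)

lemma memL2W_eta {α ε : ℝ} (hα : 0 < α) (hε : 0 < ε) {r : ℝ → ℝ} (hrm : Measurable r)
    (hrpos : ∀ᵐ x ∂(volume : Measure ℝ), ε < |x| → 0 < x * r x) :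
    MemL2W (eta α r) (gzero r ε) := by
  have hbound : Integrable
      (Set.indicator {x : ℝ | ε < |x|} (fun x : ℝ => |x| ^ (-(α / 2) - 1))) :=
    integrable_tail_rpow hε (by linarith)
  apply Integrable.mono' hbound
  · apply Measurable.aestronglyMeasurable
    apply Measurable.mul
    · exact (gzero_measurable hrm).norm.pow_const 2
    · unfold eta
      fun_prop
  · filter_upwards [hrpos] with x hP
    by_cases hx : ε < |x|
    · have ht := hP hx
      obtain ⟨hx0, hr0⟩ := abs_ne_zero_of_pos_mul ht
      have hb : 0 < |x| := lt_trans hε hx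
      have habs : x * r x = |x| * |r x| := by rw [← abs_mul, abs_of_pos ht]
      have ha : 0 < |x| ^ α := Real.rpow_pos_of_pos hb α
      have hrabs : |r x| ≠ 0 := abs_ne_zero.2 hr0
      have hval : ‖gzero r ε x‖ ^ 2 * eta α r x
          = (Real.sqrt (|x| ^ α + 1) - Real.sqrt (|x| ^ α)) / |x| := by
        rw [norm_sq_gzero hx ht, habs]
        unfold eta
        field_simp
      rw [Real.norm_eq_abs, abs_of_nonneg (mul_nonneg (by positivity) (eta_nonneg α r x)),
        hval, Set.indicator_of_mem (show x ∈ {x : ℝ | ε < |x|} from hx)]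
      have hrhs : |x| ^ (-(α / 2) - 1) = (1 / Real.sqrt (|x| ^ α)) / |x| := by
        rw [sqrt_rpow_pos hb, show -(α / 2) - 1 = -(α / 2) + -1 by ring,
          Real.rpow_add hb, Real.rpow_neg hb.le, Real.rpow_neg hb.le, Real.rpow_one]
        field_simp
      rw [hrhs]
      gcongr
      exact sqrt_add_one_sub_sqrt_le ha
    · rw [Set.indicator_of_notMem (show x ∉ {x : ℝ | ε < |x|} from hx)]
      unfold gzero
      rw [if_pos (not_lt.1 hx)]
      simp

lemma memL2W_omega {α ε : ℝ} {r : ℝ → ℝ} (hrodd : ∀ x, r (-x) = -r x) :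
    MemL2W (omegaW α r) (oddPart (gzero r ε)) := by
  unfold MemL2W
  rw [gzero_oddPart hrodd]
  simpa using (integrable_zero ℝ ℝ (volume : Measure ℝ))

/-- For `α ∈ (0,2]` and `k > ε`, the truncation `g_k := χ_{(ε,k]}·g₀` satisfies
`t_α(g_k,g_k) ≥ 2‖(g_k)_o‖²_{ω_α} = (2/α)(√(k^α) − √(ε^α))`; in particular
`t_α(g_k,g_k) → ∞` as `k → ∞`, although `g₀ ∈ dom t_α`. -/
theorem gzero_truncations_blow_up (α ε : ℝ) (hα : α ∈ Set.Ioc (0 : ℝ) 2) (hε : 0 < ε)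
    (r : ℝ → ℝ) (hrm : Measurable r) (hr0 : ∀ x, |x| ≤ ε → r x = 0)
    (hrpos : ∀ᵐ x ∂(volume : Measure ℝ), ε < |x| → 0 < x * r x)
    (hrodd : ∀ x, r (-x) = -r x) :
    DomT α r (gzero r ε) ∧
    (∀ k : ℝ, ε < k →
      (2 * ∫ x, ‖oddPart (fun y => Set.indicator (Set.Ioc ε k) (gzero r ε) y) x‖ ^ 2 *
          omegaW α r x) = (2 / α) * (Real.sqrt (k ^ α) - Real.sqrt (ε ^ α)) ∧
      (2 / α) * (Real.sqrt (k ^ α) - Real.sqrt (ε ^ α)) ≤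
        Qform α r (fun y => Set.indicator (Set.Ioc ε k) (gzero r ε) y)) ∧
    Tendsto (fun k : ℝ => Qform α r (fun y => Set.indicator (Set.Ioc ε k) (gzero r ε) y))
      atTop atTop := by
  obtain ⟨hα0, hα2⟩ := hα
  have hdom : DomT α r (gzero r ε) := by
    refine ⟨memL2W_rminus hε hrpos, ?_, memL2W_omega hrodd⟩
    rw [gzero_evenPart hrodd]
    exact memL2W_eta hα0 hε hrm hrpos
  have hmain : ∀ k : ℝ, ε < k →
      (2 * ∫ x, ‖oddPart (fun y => Set.indicator (Set.Ioc ε k) (gzero r ε) y) x‖ ^ 2 *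
          omegaW α r x) = (2 / α) * (Real.sqrt (k ^ α) - Real.sqrt (ε ^ α)) := by
    intro k hk
    have hInt1 : Integrable ((Set.Ioc ε k).indicator fun t : ℝ => 4⁻¹ * |t| ^ (α / 2 - 1)) :=
      phi_indicator_integrable hε
    have habs : ∀ t : ℝ, (fun t : ℝ => 4⁻¹ * |t| ^ (α / 2 - 1)) (-t)
        = (fun t : ℝ => 4⁻¹ * |t| ^ (α / 2 - 1)) t := fun t => by simp only [abs_neg]
    have hInt2 := integrable_neg_indicator habs hInt1
    have hcong : (∫ x, ‖oddPart (fun y => Set.indicator (Set.Ioc ε k) (gzero r ε) y) x‖ ^ 2 *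
            omegaW α r x)
        = ∫ x, ((Set.Ioc ε k).indicator (fun t : ℝ => 4⁻¹ * |t| ^ (α / 2 - 1)) x
            + (-(Set.Ioc ε k)).indicator (fun t : ℝ => 4⁻¹ * |t| ^ (α / 2 - 1)) x) :=
      integral_congr_ae (hrpos.mono fun x hx => odd_integrand_eq hε hrodd x hx)
    rw [hcong, integral_add hInt1 hInt2, integral_neg_indicator habs,
      phi_indicator_integral hα0 hε hk,
      sqrt_rpow_pos (hε.trans hk) α, sqrt_rpow_pos hε α]
    field_simp
    ring
  have hq : ∀ k : ℝ, ε < k →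
      (2 / α) * (Real.sqrt (k ^ α) - Real.sqrt (ε ^ α)) ≤
        Qform α r (fun y => Set.indicator (Set.Ioc ε k) (gzero r ε) y) := by
    intro k hk
    have hpos : 0 ≤ ∫ x, ‖(fun y => Set.indicator (Set.Ioc ε k) (gzero r ε) y) x‖ ^ 2 *
        eta α r x :=
      integral_nonneg fun x => mul_nonneg (by positivity) (eta_nonneg α r x)
    have h2 := hmain k hk
    unfold Qform
    linarith
  refine ⟨hdom, fun k hk => ⟨hmain k hk, hq k hk⟩, ?_⟩
  have hlow : Tendsto (fun k : ℝ => (2 / α) * (Real.sqrt (k ^ α) - Real.sqrt (ε ^ α)))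
      atTop atTop := by
    apply Tendsto.const_mul_atTop (by positivity : (0 : ℝ) < 2 / α)
    have h1 : Tendsto (fun k : ℝ => Real.sqrt (k ^ α)) atTop atTop := by
      apply Tendsto.congr' (f₁ := fun k : ℝ => k ^ (α / 2))
      · filter_upwards [eventually_gt_atTop (0 : ℝ)] with k hk
        exact (sqrt_rpow_pos hk α).symm
      · exact tendsto_rpow_atTop (by linarith)
    simp only [sub_eq_add_neg]
    exact tendsto_atTop_add_const_right _ _ h1
  apply tendsto_atTop_mono' atTop ?_ hlow
  filter_upwards [eventually_gt_atTop ε] with k hk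
  exact hq k hk
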